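/- arXiv:1910.02514 — 5 statements merged into one kernel-verified Lean document; each statement's English description precedes it below -/
import Mathlib

section
/- Let J be an N×N real matrix, f a nonzero vector in ℝ^N, and let V be an N×M matrix whose columns form an orthonormal basis of the Krylov subspace K_M(J, f) = span{f, Jf, ..., J^{M-1}f}, assumed to have dimension M. Define A = V Vᵀ J V Vᵀ. Then for every integer k with 0 ≤ k ≤ M - 1, A^k f = J^k f. -/
open Matrix

section Krylov

variable {R n : Type*} [CommSemiring R] [Fintype n]

theorem Matrix.mulVec_mul_transpose_of_mem_range {m : Type*} [Fintype m] [DecidableEq m]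
    {V : Matrix n m R} (hV : Vᵀ * V = 1) {x : n → R} (hx : x ∈ LinearMap.range V.mulVecLin) :
    (V * Vᵀ) *ᵥ x = x := by
  obtain ⟨y, rfl⟩ := hx
  rw [mulVecLin_apply, mulVec_mulVec, Matrix.mul_assoc, hV, Matrix.mul_one]

theorem Matrix.pow_compression_mulVec_eq [DecidableEq n] {P J : Matrix n n R} {f : n → R} {k : ℕ}
    (hP : ∀ i ≤ k, P *ᵥ (J ^ i *ᵥ f) = J ^ i *ᵥ f) :
    (P * J * P) ^ k *ᵥ f = J ^ k *ᵥ f := by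
  induction k with
  | zero => simp
  | succ k ih =>
    have hk : P *ᵥ (J ^ k *ᵥ f) = J ^ k *ᵥ f := hP k k.le_succ
    have hk1 : P *ᵥ (J ^ (k + 1) *ᵥ f) = J ^ (k + 1) *ᵥ f := hP (k + 1) le_rfl
    calc (P * J * P) ^ (k + 1) *ᵥ f
        = P *ᵥ (J *ᵥ (P *ᵥ ((P * J * P) ^ k *ᵥ f))) := by
          rw [pow_succ', ← mulVec_mulVec, ← mulVec_mulVec, ← mulVec_mulVec]
      _ = P *ᵥ (J ^ (k + 1) *ᵥ f) := by
          rw [ih fun i hi => hP i (hi.trans k.le_succ), hk, pow_succ', ← mulVec_mulVec]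
      _ = J ^ (k + 1) *ᵥ f := hk1

end Krylov

theorem stmt1_general {N M : ℕ} (J : Matrix (Fin N) (Fin N) ℝ)
    (f : Fin N → ℝ)
    (V : Matrix (Fin N) (Fin M) ℝ) (hV : Vᵀ * V = 1)
    (hrange : LinearMap.range V.mulVecLin =
      Submodule.span ℝ {x : Fin N → ℝ | ∃ i < M, x = (J ^ i).mulVec f})
    (A : Matrix (Fin N) (Fin N) ℝ) (hA : A = V * Vᵀ * J * V * Vᵀ) :
    ∀ k : ℕ, k ≤ M - 1 → (A ^ k).mulVec f = (J ^ k).mulVec f := by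
  intro k hk
  rcases k.eq_zero_or_pos with rfl | hk0
  · simp
  have hA' : A = V * Vᵀ * J * (V * Vᵀ) := by rw [hA, Matrix.mul_assoc _ V]
  rw [hA']
  refine Matrix.pow_compression_mulVec_eq fun i hi => ?_
  refine Matrix.mulVec_mul_transpose_of_mem_range hV ?_
  rw [hrange]
  exact Submodule.subset_span ⟨i, by omega, rfl⟩

/-- the Krylov approximation `A = V Vᵀ J V Vᵀ` satisfies
`A^k f = J^k f` for `0 ≤ k ≤ M - 1`. -/
theorem stmt1 {N M : ℕ} (hM : 0 < M) (J : Matrix (Fin N) (Fin N) ℝ)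
    (f : Fin N → ℝ) (hf : f ≠ 0)
    (V : Matrix (Fin N) (Fin M) ℝ) (hV : Vᵀ * V = 1)
    (hrange : LinearMap.range V.mulVecLin =
      Submodule.span ℝ {x : Fin N → ℝ | ∃ i < M, x = (J ^ i).mulVec f})
    (hdim : Module.finrank ℝ
      (Submodule.span ℝ {x : Fin N → ℝ | ∃ i < M, x = (J ^ i).mulVec f}) = M)
    (A : Matrix (Fin N) (Fin N) ℝ) (hA : A = V * Vᵀ * J * V * Vᵀ) :
    ∀ k : ℕ, k ≤ M - 1 → (A ^ k).mulVec f = (J ^ k).mulVec f :=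
  stmt1_general J f V hV hrange A hA
end

section
/- With notation as in the Rosenbrock stability setup (β = α + γ, and both I - h(β⊗J) and I - h(α⊗J) - h(γ⊗A) invertible), the transfer matrix decomposes as R̃(hJ, hA) = R(hJ) + S(hJ, hA), where R(hJ) = I + (bᵀ⊗I_N)[I - h(β⊗J)]⁻¹(1_s ⊗ hJ) is the stability matrix of the classical Rosenbrock method with exact Jacobian, and S(hJ,hA) = -(bᵀ⊗I_N)[I - h(β⊗J)]⁻¹ [γ ⊗ h(J - A)] [I - h(α⊗J) - h(γ⊗A)]⁻¹ (1_s ⊗ hJ). -/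
/-!
With `P = I - h(α⊗J) - h(γ⊗A)` and `Q = I - h(β⊗J)`, the hypothesis `β = α + γ` gives
`P - Q = γ ⊗ h(J - A)`, and the decomposition is the second resolvent identity
`P⁻¹ = Q⁻¹ - Q⁻¹ (P - Q) P⁻¹` multiplied by `B` on the left and `C` on the right.
-/

open Matrix
open scoped Kronecker

namespace Matrix

variable {l m n R : Type*} [DecidableEq n] [CommRing R]

theorem mul_inv_mul_eq_sub_mul_inv_sub_mul_inv_mul [Fintype n] (B : Matrix l n R)
    (C : Matrix n m R) {P Q : Matrix n n R} (hP : IsUnit P.det) (hQ : IsUnit Q.det) :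
    B * P⁻¹ * C = B * Q⁻¹ * C - B * Q⁻¹ * (P - Q) * P⁻¹ * C := by
  have hres : Q⁻¹ - P⁻¹ = Q⁻¹ * (P - Q) * P⁻¹ :=
    inv_sub_inv (iff_of_true ((isUnit_iff_isUnit_det Q).mpr hQ) ((isUnit_iff_isUnit_det P).mpr hP))
  calc B * P⁻¹ * C = B * (Q⁻¹ - (Q⁻¹ - P⁻¹)) * C := by rw [sub_sub_cancel]
    _ = B * Q⁻¹ * C - B * Q⁻¹ * (P - Q) * P⁻¹ * C := by
      rw [hres, Matrix.mul_sub, Matrix.sub_mul]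
      simp only [Matrix.mul_assoc]

theorem one_sub_smul_kronecker_sub_one_sub_smul_add_kronecker [DecidableEq l]
    (α γ : Matrix l l R) (J A : Matrix n n R) (h : R) :
    (1 - h • (α ⊗ₖ J) - h • (γ ⊗ₖ A)) - (1 - h • ((α + γ) ⊗ₖ J)) = γ ⊗ₖ (h • (J - A)) := by
  have hsub : γ ⊗ₖ (J - A) = γ ⊗ₖ J - γ ⊗ₖ A := (kroneckerBilinear (R := R) γ).map_sub J A
  rw [add_kronecker, kronecker_smul, hsub]
  module

end Matrix

theorem stmt5_general {N s : ℕ} (J A : Matrix (Fin N) (Fin N) ℝ)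
    (α γ β : Matrix (Fin s) (Fin s) ℝ) (hβ : β = α + γ)
    (h : ℝ)
    (hQ : IsUnit ((1 : Matrix (Fin s × Fin N) (Fin s × Fin N) ℝ) - h • (β ⊗ₖ J)).det)
    (hP : IsUnit ((1 : Matrix (Fin s × Fin N) (Fin s × Fin N) ℝ)
      - h • (α ⊗ₖ J) - h • (γ ⊗ₖ A)).det)
    (B : Matrix (Fin N) (Fin s × Fin N) ℝ)
    (C : Matrix (Fin s × Fin N) (Fin N) ℝ) :
    (1 : Matrix (Fin N) (Fin N) ℝ)
      + B * ((1 : Matrix (Fin s × Fin N) (Fin s × Fin N) ℝ)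
              - h • (α ⊗ₖ J) - h • (γ ⊗ₖ A))⁻¹ * C
    = ((1 : Matrix (Fin N) (Fin N) ℝ)
        + B * ((1 : Matrix (Fin s × Fin N) (Fin s × Fin N) ℝ) - h • (β ⊗ₖ J))⁻¹ * C)
      + (-(B * ((1 : Matrix (Fin s × Fin N) (Fin s × Fin N) ℝ) - h • (β ⊗ₖ J))⁻¹
          * (γ ⊗ₖ (h • (J - A)))
          * ((1 : Matrix (Fin s × Fin N) (Fin s × Fin N) ℝ)
              - h • (α ⊗ₖ J) - h • (γ ⊗ₖ A))⁻¹ * C)) := by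
  subst hβ
  rw [mul_inv_mul_eq_sub_mul_inv_sub_mul_inv_mul B C hP hQ,
    one_sub_smul_kronecker_sub_one_sub_smul_add_kronecker]
  abel

/-- decomposition of the transfer matrix `R̃(hJ,hA) = R(hJ) + S(hJ,hA)`. -/
theorem stmt5 {N s : ℕ} (J A : Matrix (Fin N) (Fin N) ℝ)
    (α γ β : Matrix (Fin s) (Fin s) ℝ) (hβ : β = α + γ)
    (b : Fin s → ℝ) (h : ℝ)
    (hQ : IsUnit ((1 : Matrix (Fin s × Fin N) (Fin s × Fin N) ℝ) - h • (β ⊗ₖ J)).det)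
    (hP : IsUnit ((1 : Matrix (Fin s × Fin N) (Fin s × Fin N) ℝ)
      - h • (α ⊗ₖ J) - h • (γ ⊗ₖ A)).det)
    (B : Matrix (Fin N) (Fin s × Fin N) ℝ)
    (hB : B = Matrix.of fun (i : Fin N) (p : Fin s × Fin N) =>
      b p.1 * (1 : Matrix (Fin N) (Fin N) ℝ) i p.2)
    (C : Matrix (Fin s × Fin N) (Fin N) ℝ)
    (hC : C = Matrix.of fun (p : Fin s × Fin N) (j : Fin N) => h * J p.2 j) :
    (1 : Matrix (Fin N) (Fin N) ℝ)
      + B * ((1 : Matrix (Fin s × Fin N) (Fin s × Fin N) ℝ)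
              - h • (α ⊗ₖ J) - h • (γ ⊗ₖ A))⁻¹ * C
    = ((1 : Matrix (Fin N) (Fin N) ℝ)
        + B * ((1 : Matrix (Fin s × Fin N) (Fin s × Fin N) ℝ) - h • (β ⊗ₖ J))⁻¹ * C)
      + (-(B * ((1 : Matrix (Fin s × Fin N) (Fin s × Fin N) ℝ) - h • (β ⊗ₖ J))⁻¹
          * (γ ⊗ₖ (h • (J - A)))
          * ((1 : Matrix (Fin s × Fin N) (Fin s × Fin N) ℝ)
              - h • (α ⊗ₖ J) - h • (γ ⊗ₖ A))⁻¹ * C)) :=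
  stmt5_general J A α γ β hβ h hQ hP B C
end

section
/- Theorem (stage residual of a Rosenbrock–Krylov method): Let J ∈ ℝ^{N×N}, V ∈ ℝ^{N×M} with VᵀV = I_M, and H, v_{M+1}, h_{M+1,M} satisfy the Arnoldi relation J V = V H + h_{M+1,M} v_{M+1} e_Mᵀ. Suppose for each stage i: ψ_i = Vᵀ F_i, λ_i = h ψ_i + h H Σ_{j=1}^{i} γ_{i,j} λ_j, and k_i = V λ_i + h (F_i - V ψ_i), where F_i ∈ ℝ^N are given vectors and γ_{i,j} scalars. Define the residual r_i := k_i - h F_i - h J Σ_{j=1}^{i} γ_{i,j} k_j. Then r_i = - Σ_{j=1}^{i} h² γ_{i,j} J (F_j - V ψ_j) - h h_{M+1,M} v_{M+1} e_Mᵀ Σ_{j=1}^{i} γ_{i,j} λ_j. -/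
/-!
Write `S = ∑ⱼ γᵢⱼ λⱼ` and `T = ∑ⱼ γᵢⱼ (Fⱼ - V ψⱼ)`, so that `∑ⱼ γᵢⱼ kⱼ = V S + h T`.
Substituting the recurrence for `λᵢ` into `kᵢ` cancels the `V ψᵢ` terms, leaving
`kᵢ = h V H S + h Fᵢ`, while the Arnoldi relation gives `J V S = V H S + h_{M+1,M} S_M v_{M+1}`.
In the residual the `V H S` and `Fᵢ` terms cancel, and what remains is `-h² J T` together
with the Arnoldi remainder.
-/

open Matrix

namespace Matrix

variable {R m n ι : Type*} [CommRing R] [Fintype n]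

theorem mulVec_mulVec_of_mul_eq_add_vecMulVec [Fintype m] {J : Matrix m m R} {V : Matrix m n R}
    {H : Matrix n n R} {c : R} {w : m → R} {u : n → R}
    (hArn : J * V = V * H + c • vecMulVec w u) (x : n → R) :
    J *ᵥ (V *ᵥ x) = V *ᵥ (H *ᵥ x) + (c * (u ⬝ᵥ x)) • w := by
  rw [mulVec_mulVec, hArn, add_mulVec, ← mulVec_mulVec, smul_mulVec, vecMulVec_mulVec,
    op_smul_eq_smul, smul_smul]

theorem sum_smul_mulVec_add_smul (V : Matrix m n R) (t : Finset ι) (g : ι → R)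
    (a : ι → n → R) (b : ι → m → R) (h : R) :
    ∑ j ∈ t, g j • (V *ᵥ a j + h • b j)
      = V *ᵥ ∑ j ∈ t, g j • a j + h • ∑ j ∈ t, g j • b j := by
  simp only [mulVec_sum, mulVec_smul, Finset.smul_sum, ← Finset.sum_add_distrib, smul_add,
    smul_comm h]

end Matrix

theorem stmt7_general {N M s : ℕ} (J : Matrix (Fin N) (Fin N) ℝ)
    (V : Matrix (Fin N) (Fin (M + 1)) ℝ)
    (H : Matrix (Fin (M + 1)) (Fin (M + 1)) ℝ)
    (w : Fin N → ℝ) (h1 : ℝ)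
    (hArn : J * V = V * H + h1 • Matrix.vecMulVec w (Pi.single (Fin.last M) 1))
    (h : ℝ) (γ : Fin s → Fin s → ℝ)
    (F k : Fin s → Fin N → ℝ) (ψ lam : Fin s → Fin (M + 1) → ℝ)
    (hlam : ∀ i, lam i = h • ψ i
      + h • H.mulVec (∑ j ∈ Finset.Iic i, γ i j • lam j))
    (hk : ∀ i, k i = V.mulVec (lam i) + h • (F i - V.mulVec (ψ i)))
    (r : Fin s → Fin N → ℝ)
    (hr : ∀ i, r i = k i - h • F i
      - h • J.mulVec (∑ j ∈ Finset.Iic i, γ i j • k j)) :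
    ∀ i, r i
      = -(∑ j ∈ Finset.Iic i, (h ^ 2 * γ i j) • J.mulVec (F j - V.mulVec (ψ j)))
        - (h * h1 * ∑ j ∈ Finset.Iic i, γ i j * lam j (Fin.last M)) • w := by
  intro i
  set S := ∑ j ∈ Finset.Iic i, γ i j • lam j
  set T := ∑ j ∈ Finset.Iic i, γ i j • (F j - V *ᵥ ψ j)
  have hkS : ∑ j ∈ Finset.Iic i, γ i j • k j = V *ᵥ S + h • T := by
    simp only [hk, sum_smul_mulVec_add_smul, S, T]
  have hki : k i = h • V *ᵥ (H *ᵥ S) + h • F i := by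
    rw [hk, hlam, mulVec_add, mulVec_smul, mulVec_smul]
    module
  have hSM : Pi.single (Fin.last M) 1 ⬝ᵥ S = ∑ j ∈ Finset.Iic i, γ i j * lam j (Fin.last M) := by
    simp [single_dotProduct, S, Finset.sum_apply]
  have hJT : ∑ j ∈ Finset.Iic i, (h ^ 2 * γ i j) • J *ᵥ (F j - V *ᵥ ψ j) = h ^ 2 • J *ᵥ T := by
    simp only [T, mulVec_sum, mulVec_smul, Finset.smul_sum, smul_smul]
  rw [hr, hkS, mulVec_add, mulVec_mulVec_of_mul_eq_add_vecMulVec hArn, hSM, hki, hJT,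
    mulVec_smul]
  module

/-- stage residual of a Rosenbrock–Krylov method. -/
theorem stmt7 {N M s : ℕ} (J : Matrix (Fin N) (Fin N) ℝ)
    (V : Matrix (Fin N) (Fin (M + 1)) ℝ) (hV : Vᵀ * V = 1)
    (H : Matrix (Fin (M + 1)) (Fin (M + 1)) ℝ)
    (w : Fin N → ℝ) (h1 : ℝ)
    (hArn : J * V = V * H + h1 • Matrix.vecMulVec w (Pi.single (Fin.last M) 1))
    (h : ℝ) (γ : Fin s → Fin s → ℝ)
    (F k : Fin s → Fin N → ℝ) (ψ lam : Fin s → Fin (M + 1) → ℝ)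
    (hψ : ∀ i, ψ i = Vᵀ.mulVec (F i))
    (hlam : ∀ i, lam i = h • ψ i
      + h • H.mulVec (∑ j ∈ Finset.Iic i, γ i j • lam j))
    (hk : ∀ i, k i = V.mulVec (lam i) + h • (F i - V.mulVec (ψ i)))
    (r : Fin s → Fin N → ℝ)
    (hr : ∀ i, r i = k i - h • F i
      - h • J.mulVec (∑ j ∈ Finset.Iic i, γ i j • k j)) :
    ∀ i, r i
      = -(∑ j ∈ Finset.Iic i, (h ^ 2 * γ i j) • J.mulVec (F j - V.mulVec (ψ j)))
        - (h * h1 * ∑ j ∈ Finset.Iic i, γ i j * lam j (Fin.last M)) • w :=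
  stmt7_general J V H w h1 hArn h γ F k ψ lam hlam hk r hr
end

section
/- Corollary (first-stage residual): Under the hypotheses of the stage-residual theorem, with additionally F_1 lying in the column span of V (so that F_1 = V ψ_1 with ψ_1 = Vᵀ F_1), the first-stage residual equals r_1 = -h γ h_{M+1,M} v_{M+1} (e_Mᵀ λ_1), where γ = γ_{1,1}. Consequently, if ‖v_{M+1}‖ = 1, then ‖r_1‖ = |h γ h_{M+1,M}| · |e_Mᵀ λ_1|. -/
open Matrix

/-! Since `F₁ ∈ range V` and `V` has orthonormal columns, `F₁ = V ψ₁`, so the correction term of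
`k₁` vanishes and `k₁ = V λ₁`. The Arnoldi relation `J V = V H + h₁ w e_Mᵀ` then gives
`J k₁ = V (H λ₁) + h₁ λ₁(M) w`, and the Galerkin condition defining `λ₁` cancels everything in
`r₁` except the component along `w`. -/

namespace Matrix

variable {R m n : Type*} [Fintype m] [Fintype n]

theorem mulVec_transpose_mulVec_of_eq_mulVec [CommSemiring R] [DecidableEq n]
    {V : Matrix m n R} (hV : Vᵀ * V = 1) {F : m → R} {c : n → R} (hF : F = V *ᵥ c) :
    V *ᵥ (Vᵀ *ᵥ F) = F := by
  rw [hF, mulVec_mulVec c Vᵀ V, hV, one_mulVec]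

theorem mulVec_mulVec_of_arnoldi [CommSemiring R] [DecidableEq n]
    {J : Matrix m m R} {V : Matrix m n R} {H : Matrix n n R} {w : m → R} {β : R} {j : n}
    (hArn : J * V = V * H + β • vecMulVec w (Pi.single j 1)) (x : n → R) :
    J *ᵥ (V *ᵥ x) = V *ᵥ (H *ᵥ x) + (β * x j) • w := by
  rw [mulVec_mulVec, hArn, add_mulVec, ← mulVec_mulVec, smul_mulVec, vecMulVec_mulVec,
    single_one_dotProduct, op_smul_eq_smul, smul_smul]

end Matrix

theorem sqrt_sum_sq_smul_of_sum_sq_eq_one {ι : Type*} [Fintype ι] {w : ι → ℝ}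
    (hw : ∑ i, w i ^ 2 = 1) (a : ℝ) :
    Real.sqrt (∑ i, (a • w) i ^ 2) = |a| := by
  simp only [Pi.smul_apply, smul_eq_mul, mul_pow, ← Finset.mul_sum, hw, mul_one,
    Real.sqrt_sq_eq_abs]

/-- residual of the first stage of a Rosenbrock–Krylov method. -/
theorem stmt8 {N M : ℕ} (J : Matrix (Fin N) (Fin N) ℝ)
    (V : Matrix (Fin N) (Fin (M + 1)) ℝ) (hV : Vᵀ * V = 1)
    (H : Matrix (Fin (M + 1)) (Fin (M + 1)) ℝ)
    (w : Fin N → ℝ) (h1 : ℝ)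
    (hArn : J * V = V * H + h1 • Matrix.vecMulVec w (Pi.single (Fin.last M) 1))
    (h γ : ℝ) (F1 k1 : Fin N → ℝ) (ψ1 lam1 : Fin (M + 1) → ℝ)
    (hψ : ψ1 = Vᵀ.mulVec F1)
    (hF1 : ∃ c, F1 = V.mulVec c)
    (hlam : lam1 = h • ψ1 + (h * γ) • H.mulVec lam1)
    (hk : k1 = V.mulVec lam1 + h • (F1 - V.mulVec ψ1))
    (r1 : Fin N → ℝ)
    (hr : r1 = k1 - h • F1 - (h * γ) • J.mulVec k1)
    (hw : ∑ i, w i ^ 2 = 1) :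
    r1 = -(h * γ * h1 * lam1 (Fin.last M)) • w ∧
    Real.sqrt (∑ i, r1 i ^ 2) = |h * γ * h1| * |lam1 (Fin.last M)| := by
  obtain ⟨c, hc⟩ := hF1
  have hF1_eq : V *ᵥ ψ1 = F1 := hψ ▸ mulVec_transpose_mulVec_of_eq_mulVec hV hc
  have hk1 : k1 = V *ᵥ lam1 := by rw [hk, hF1_eq, sub_self, smul_zero, add_zero]
  have hVlam : V *ᵥ lam1 = h • F1 + (h * γ) • V *ᵥ (H *ᵥ lam1) := by
    conv_lhs => rw [hlam]
    rw [mulVec_add, mulVec_smul, mulVec_smul, hF1_eq]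
  have hr1 : r1 = -(h * γ * h1 * lam1 (Fin.last M)) • w := by
    rw [hr, hk1, mulVec_mulVec_of_arnoldi hArn, hVlam]
    module
  refine ⟨hr1, ?_⟩
  rw [hr1, sqrt_sum_sq_smul_of_sum_sq_eq_one hw, abs_neg, abs_mul]
end

section
/- Let J, A ∈ ℝ^{N×N}, and let α, γ ∈ ℝ^{s×s} with α strictly lower triangular and γ lower triangular with diagonal entries all equal to γ₀. Assume I - hγ₀J and I - hγ₀A are invertible. Then the Ns×Ns matrices I - h(α⊗J) - h(γ⊗A) and I - h((α+γ)⊗J) are invertible, and for F = (F_1,...,F_s) ∈ ℝ^{Ns}, the i-th block of [I - h((α+γ)⊗J)]⁻¹ [γ ⊗ h(J-A)] [I - h(γ⊗A)]⁻¹ F equals (I - hγ₀J)⁻¹ F_i - (I - hγ₀A)⁻¹ F_i plus a linear combination (with matrix coefficients) of F_1, ..., F_{i-1} only. -/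
/-!
Order the index set `Fin s × Fin N` by the stage index; `M.BlockTriangular (toDual ∘ Prod.fst)`
says that `M` is block lower triangular for this order. The three factors
`P = I - h((α+γ)⊗J)`, `K = γ ⊗ h(J-A)` and `Q = I - h(γ⊗A)` are block lower triangular with constant
diagonal blocks `X = I - hγ₀J`, `Y - X` and `Y = I - hγ₀A`. Determinants of such matrices are
products of the determinants of the diagonal blocks, inverses and products stay block lower
triangular, and diagonal blocks multiply blockwise. Hence `P⁻¹KQ⁻¹` is block lower triangular with
diagonal block `X⁻¹(Y - X)Y⁻¹ = X⁻¹ - Y⁻¹`, and its blocks below the diagonal are the coefficients.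
-/

open Matrix Finset OrderDual
open scoped Kronecker

namespace Matrix

variable {ι κ R : Type*}

def block (M : Matrix (ι × κ) (ι × κ) R) (i j : ι) : Matrix κ κ R :=
  M.submatrix (Prod.mk i) (Prod.mk j)

@[simp]
lemma block_apply (M : Matrix (ι × κ) (ι × κ) R) (i j : ι) (n m : κ) :
    block M i j n m = M (i, n) (j, m) := rfl

@[simp]
lemma block_add [Add R] (M M' : Matrix (ι × κ) (ι × κ) R) (i j : ι) :
    block (M + M') i j = block M i j + block M' i j := rfl

@[simp]
lemma block_sub [Sub R] (M M' : Matrix (ι × κ) (ι × κ) R) (i j : ι) :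
    block (M - M') i j = block M i j - block M' i j := rfl

@[simp]
lemma block_smul {S : Type*} [SMul S R] (c : S) (M : Matrix (ι × κ) (ι × κ) R) (i j : ι) :
    block (c • M) i j = c • block M i j := rfl

@[simp]
lemma block_kronecker [Mul R] (a : Matrix ι ι R) (B : Matrix κ κ R) (i j : ι) :
    block (a ⊗ₖ B) i j = a i j • B := rfl

@[simp]
lemma block_one_self [DecidableEq ι] [DecidableEq κ] [Zero R] [One R] (i : ι) :
    block (1 : Matrix (ι × κ) (ι × κ) R) i i = 1 :=
  submatrix_one _ (Prod.mk_right_injective i)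

protected lemma BlockTriangular.smul {α S : Type*} [LT α] [Zero R] [SMulZeroClass S R]
    {M : Matrix ι ι R} {b : ι → α} (hM : M.BlockTriangular b) (c : S) :
    (c • M).BlockTriangular b :=
  fun _ _ h => by simp [hM h]

lemma IsLowerTriangular.kronecker [LT ι] [MulZeroClass R] {a : Matrix ι ι R}
    (ha : a.IsLowerTriangular) (B : Matrix κ κ R) :
    (a ⊗ₖ B).BlockTriangular (toDual ∘ Prod.fst) :=
  fun _ _ h => by simp [kroneckerMap_apply, ha h]

lemma BlockTriangular.block_eq_zero [LT ι] [Zero R] {M : Matrix (ι × κ) (ι × κ) R}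
    (hM : M.BlockTriangular (toDual ∘ Prod.fst)) {i j : ι} (hij : i < j) :
    block M i j = 0 := by
  ext n m
  exact hM hij

lemma BlockTriangular.inv {α : Type*} [LinearOrder α] [Fintype ι] [DecidableEq ι] [CommRing R]
    {M : Matrix ι ι R} {b : ι → α} (hM : M.BlockTriangular b) : M⁻¹.BlockTriangular b := by
  by_cases hd : IsUnit M.det
  · have := M.invertibleOfIsUnitDet hd
    exact blockTriangular_inv_of_blockTriangular hM
  · rw [nonsing_inv_apply_not_isUnit M hd]
    exact blockTriangular_zero

section

variable [Fintype ι] [LinearOrder ι] [Fintype κ]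

lemma BlockTriangular.block_mul_self [NonUnitalNonAssocSemiring R]
    {M N : Matrix (ι × κ) (ι × κ) R} (hM : M.BlockTriangular (toDual ∘ Prod.fst))
    (hN : N.BlockTriangular (toDual ∘ Prod.fst)) (i : ι) :
    block (M * N) i i = block M i i * block N i i := by
  ext n m
  simp only [block_apply, mul_apply, Fintype.sum_prod_type]
  refine sum_eq_single i (fun k _ hki => ?_) (by simp)
  rcases hki.lt_or_gt with hk | hk
  · exact sum_eq_zero fun p _ => by rw [hN (i := (k, p)) (j := (i, m)) hk, mul_zero]
  · exact sum_eq_zero fun p _ => by rw [hM (i := (i, n)) (j := (k, p)) hk, zero_mul]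

lemma mulVec_apply_eq_block_add_sum [LocallyFiniteOrderBot ι] [NonUnitalNonAssocSemiring R]
    {M : Matrix (ι × κ) (ι × κ) R} (hM : M.BlockTriangular (toDual ∘ Prod.fst))
    (F : ι × κ → R) (i : ι) (n : κ) :
    (M *ᵥ F) (i, n) = (block M i i *ᵥ fun m => F (i, m)) n
      + ∑ j ∈ Iio i, (block M i j *ᵥ fun m => F (j, m)) n := by
  have hsum : (M *ᵥ F) (i, n) = ∑ j, (block M i j *ᵥ fun m => F (j, m)) n := by
    simp only [mulVec, dotProduct, Fintype.sum_prod_type, block_apply]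
  have hupper : ∀ j ∉ Iic i, (block M i j *ᵥ fun m => F (j, m)) n = 0 := fun j hj => by
    rw [hM.block_eq_zero (not_le.mp (by simpa using hj)), zero_mulVec, Pi.zero_apply]
  rw [hsum, ← sum_subset (subset_univ _) fun j _ => hupper j, ← Iio_insert,
    sum_insert notMem_Iio_self]

variable [DecidableEq κ] [CommRing R] {M : Matrix (ι × κ) (ι × κ) R}

lemma det_toSquareBlock_fst (M : Matrix (ι × κ) (ι × κ) R) (k : ιᵒᵈ) :
    (M.toSquareBlock (toDual ∘ Prod.fst) k).det = (block M (ofDual k) (ofDual k)).det := by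
  let e : κ ≃ {p : ι × κ // toDual p.1 = k} :=
    { toFun n := ⟨(ofDual k, n), rfl⟩
      invFun p := p.1.2
      left_inv _ := rfl
      right_inv := by rintro ⟨⟨_, _⟩, rfl⟩; rfl }
  exact (det_submatrix_equiv_self e _).symm

lemma BlockTriangular.det_eq_prod_block (hM : M.BlockTriangular (toDual ∘ Prod.fst)) :
    M.det = ∏ i, (block M i i).det := by
  rw [hM.det_fintype]
  exact Fintype.prod_congr _ _ (det_toSquareBlock_fst M)

lemma BlockTriangular.isUnit_det (hM : M.BlockTriangular (toDual ∘ Prod.fst))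
    (hd : ∀ i, IsUnit (block M i i).det) : IsUnit M.det := by
  rw [hM.det_eq_prod_block]
  exact IsUnit.prod_univ_iff.mpr hd

lemma BlockTriangular.block_inv_self (hM : M.BlockTriangular (toDual ∘ Prod.fst))
    (hd : IsUnit M.det) (i : ι) : block M⁻¹ i i = (block M i i)⁻¹ := by
  refine (inv_eq_left_inv ?_).symm
  rw [← hM.inv.block_mul_self hM, nonsing_inv_mul M hd, block_one_self]

theorem exists_mulVec_inv_mul_mul_inv_eq [LocallyFiniteOrderBot ι]
    {P K Q : Matrix (ι × κ) (ι × κ) R} {X Y : Matrix κ κ R}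
    (hP : P.BlockTriangular (toDual ∘ Prod.fst)) (hK : K.BlockTriangular (toDual ∘ Prod.fst))
    (hQ : Q.BlockTriangular (toDual ∘ Prod.fst)) (hPd : ∀ i, block P i i = X)
    (hKd : ∀ i, block K i i = Y - X) (hQd : ∀ i, block Q i i = Y)
    (hX : IsUnit X.det) (hY : IsUnit Y.det) :
    ∃ C : ι → ι → Matrix κ κ R, ∀ (F : ι × κ → R) (i : ι) (n : κ),
      ((P⁻¹ * K * Q⁻¹) *ᵥ F) (i, n)
        = (X⁻¹ *ᵥ fun m => F (i, m)) n - (Y⁻¹ *ᵥ fun m => F (i, m)) n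
          + ∑ j ∈ Iio i, (C i j *ᵥ fun m => F (j, m)) n := by
  have hPu : IsUnit P.det := hP.isUnit_det fun i => hPd i ▸ hX
  have hQu : IsUnit Q.det := hQ.isUnit_det fun i => hQd i ▸ hY
  have hdiag (i : ι) : block (P⁻¹ * K * Q⁻¹) i i = X⁻¹ - Y⁻¹ := by
    rw [(hP.inv.mul hK).block_mul_self hQ.inv, hP.inv.block_mul_self hK,
      hP.block_inv_self hPu, hQ.block_inv_self hQu, hPd, hKd, hQd, mul_sub, nonsing_inv_mul X hX,
      sub_mul, mul_nonsing_inv_cancel_right _ _ hY, one_mul]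
  refine ⟨block (P⁻¹ * K * Q⁻¹), fun F i n => ?_⟩
  rw [mulVec_apply_eq_block_add_sum ((hP.inv.mul hK).mul hQ.inv), hdiag, sub_mulVec,
    Pi.sub_apply]

end

end Matrix

/-- block-triangular structure of the stage stability term.  The `i`-th
block of `[I - h((α+γ)⊗J)]⁻¹ [γ ⊗ h(J-A)] [I - h(γ⊗A)]⁻¹ F` equals
`(I - hγ₀J)⁻¹F_i - (I - hγ₀A)⁻¹F_i` plus a combination of `F_1, …, F_{i-1}`. -/
theorem stmt15 {N s : ℕ} (J A : Matrix (Fin N) (Fin N) ℝ)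
    (α γ : Matrix (Fin s) (Fin s) ℝ)
    (hα : ∀ i j : Fin s, i ≤ j → α i j = 0)
    (γ₀ : ℝ)
    (hγlt : ∀ i j : Fin s, i < j → γ i j = 0)
    (hγd : ∀ i : Fin s, γ i i = γ₀)
    (h : ℝ)
    (hJ : IsUnit ((1 : Matrix (Fin N) (Fin N) ℝ) - (h * γ₀) • J).det)
    (hA : IsUnit ((1 : Matrix (Fin N) (Fin N) ℝ) - (h * γ₀) • A).det) :
    IsUnit ((1 : Matrix (Fin s × Fin N) (Fin s × Fin N) ℝ)
        - h • (α ⊗ₖ J) - h • (γ ⊗ₖ A)).det ∧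
    IsUnit ((1 : Matrix (Fin s × Fin N) (Fin s × Fin N) ℝ)
        - h • ((α + γ) ⊗ₖ J)).det ∧
    ∃ C : Fin s → Fin s → Matrix (Fin N) (Fin N) ℝ,
      ∀ (F : Fin s × Fin N → ℝ) (i : Fin s) (n : Fin N),
        (((1 : Matrix (Fin s × Fin N) (Fin s × Fin N) ℝ) - h • ((α + γ) ⊗ₖ J))⁻¹
          * (γ ⊗ₖ (h • (J - A)))
          * ((1 : Matrix (Fin s × Fin N) (Fin s × Fin N) ℝ) - h • (γ ⊗ₖ A))⁻¹).mulVec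
            F (i, n)
        = (((1 : Matrix (Fin N) (Fin N) ℝ) - (h * γ₀) • J)⁻¹.mulVec
              (fun m => F (i, m))) n
          - (((1 : Matrix (Fin N) (Fin N) ℝ) - (h * γ₀) • A)⁻¹.mulVec
              (fun m => F (i, m))) n
          + ∑ j ∈ Finset.Iio i, ((C i j).mulVec (fun m => F (j, m))) n := by
  have hαL : α.IsLowerTriangular := fun i j hij => hα i j hij.le
  have hγL : γ.IsLowerTriangular := fun i j => hγlt i j
  have hR := (blockTriangular_one.sub ((hαL.kronecker J).smul h)).sub ((hγL.kronecker A).smul h)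
  have hαγL : (α + γ).IsLowerTriangular := hαL.add hγL
  have hP := blockTriangular_one.sub ((hαγL.kronecker J).smul h)
  have hQ := blockTriangular_one.sub ((hγL.kronecker A).smul h)
  have hK := hγL.kronecker (h • (J - A))
  refine ⟨hR.isUnit_det fun i => ?_, hP.isUnit_det fun i => ?_,
    exists_mulVec_inv_mul_mul_inv_eq hP hK hQ (fun i => ?_) (fun i => ?_) (fun i => ?_) hJ hA⟩
  · simpa [hα i i le_rfl, hγd, smul_smul] using hA
  · simpa [hα i i le_rfl, hγd, smul_smul] using hJ
  all_goals simp [hα i i le_rfl, hγd, smul_smul, smul_sub, mul_comm]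
end
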